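/- arXiv:quant-ph/0403109 — 2 statements merged into one kernel-verified Lean document; each statement's English description precedes it below -/
import Mathlib

section
/- There is a constant c > 0 such that for every M ∈ ℕ, M ≥ 1, the space L_∞^M satisfies the type-2 inequality with constant c·(log(M+1))^{1/2} (logarithm to base 2); that is, for every m ∈ ℕ and all x_1,…,x_m ∈ ℝ^M, 2^{−m} Σ_{ε∈{−1,1}^m} ‖Σ_{i=1}^m ε_i x_i‖_{L_∞^M}^2 ≤ c^2 · log(M+1) · Σ_{i=1}^m ‖x_i‖_{L_∞^M}^2. -/
/-!
Each coordinate of a Rademacher sum `∑ εᵢ xᵢ` is subgaussian with variance proxy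
`σ² = ∑ ‖xᵢ‖²` (Hoeffding: `E exp (λ ∑ εᵢ aᵢ) ≤ exp (λ²σ²/2)`), so a union bound over the `2M`
signed coordinates gives `E exp (λ ‖∑ εᵢ xᵢ‖) ≤ 2M exp (λ²σ²/2)`. Averaging the pointwise bound
`w² ≤ 2r² + (4/λ²) exp (λ(w - r))` with `λ = √(2 log 2M) / σ` and `r = λσ²` turns this into
`E ‖∑ εᵢ xᵢ‖² ≤ (4 log 2M + 2 / log 2M) σ²`.
-/

/-- The `L_∞^M` norm on `ℝ^M`: `‖x‖ = max_i |x i|`. -/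
noncomputable def linfNorm (M : ℕ) (x : Fin M → ℝ) : ℝ :=
  ⨆ i, |x i|

open Finset Real

lemma linfNorm_eq_norm {M : ℕ} (x : Fin M → ℝ) : linfNorm M x = ‖x‖ :=
  le_antisymm (Real.iSup_le (fun i => norm_le_pi_norm x i) (norm_nonneg x))
    ((pi_norm_le_iff_of_nonneg (Real.iSup_nonneg fun i => abs_nonneg (x i))).mpr
      fun i => le_ciSup (Finite.bddAbove_range fun i => |x i|) i)

lemma exp_add_exp_neg_le (x : ℝ) : exp x + exp (-x) ≤ 2 * exp (x ^ 2 / 2) := by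
  linarith [cosh_eq x, cosh_le_exp_half_sq x]

lemma exp_mul_norm_le_sum {κ : Type*} [Fintype κ] [Nonempty κ] (v : κ → ℝ) {l : ℝ} (hl : 0 ≤ l) :
    exp (l * ‖v‖) ≤ ∑ j, (exp (l * v j) + exp (-l * v j)) := by
  obtain ⟨j, hj⟩ := Finite.exists_max fun i => |v i|
  have hnorm : ‖v‖ ≤ |v j| := (pi_norm_le_iff_of_nonneg (abs_nonneg _)).mpr hj
  calc exp (l * ‖v‖) ≤ exp |l * v j| := by
        rw [abs_mul, abs_of_nonneg hl]
        exact exp_le_exp.mpr (mul_le_mul_of_nonneg_left hnorm hl)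
    _ ≤ exp (l * v j) + exp (-l * v j) := by simpa using exp_abs_le (l * v j)
    _ ≤ ∑ j, (exp (l * v j) + exp (-l * v j)) :=
        single_le_sum (f := fun j => exp (l * v j) + exp (-l * v j))
          (fun j _ => by positivity) (mem_univ j)

section Rademacher

variable {ι : Type*} [Fintype ι]

def signedSum {E : Type*} [AddCommGroup E] (ε : ι → Bool) (x : ι → E) : E :=
  ∑ i, if ε i then x i else -x i

lemma signedSum_apply {κ : Type*} (ε : ι → Bool) (x : ι → κ → ℝ) (j : κ) :
    signedSum ε x j = signedSum ε (fun i => x i j) := by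
  simp only [signedSum, Finset.sum_apply, apply_ite (fun y : κ → ℝ => y j), Pi.neg_apply]

theorem sum_exp_mul_signedSum_le [DecidableEq ι] (a : ι → ℝ) (l : ℝ) :
    ∑ ε : ι → Bool, exp (l * signedSum ε a)
      ≤ 2 ^ Fintype.card ι * exp (l ^ 2 * (∑ i, a i ^ 2) / 2) := by
  have hprod (ε : ι → Bool) :
      exp (l * signedSum ε a) = ∏ i, exp (l * if ε i then a i else -a i) := by
    rw [signedSum, Finset.mul_sum, exp_sum]
  have hfactor (i : ι) :
      ∑ b : Bool, exp (l * if b then a i else -a i) ≤ 2 * exp ((l * a i) ^ 2 / 2) := by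
    simpa [Fintype.sum_bool] using exp_add_exp_neg_le (l * a i)
  calc ∑ ε : ι → Bool, exp (l * signedSum ε a)
      = ∏ i, ∑ b : Bool, exp (l * if b then a i else -a i) := by
        simp only [hprod, Fintype.prod_sum]
    _ ≤ ∏ i, 2 * exp ((l * a i) ^ 2 / 2) :=
        prod_le_prod (fun i _ => sum_nonneg fun b _ => (exp_pos _).le) fun i _ => hfactor i
    _ = 2 ^ Fintype.card ι * exp (l ^ 2 * (∑ i, a i ^ 2) / 2) := by
        simp only [prod_mul_distrib, prod_const, card_univ, ← exp_sum, mul_pow, ← sum_div,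
          ← mul_sum]

theorem sum_exp_mul_norm_signedSum_le [DecidableEq ι] {κ : Type*} [Fintype κ] [Nonempty κ]
    (x : ι → κ → ℝ) {l : ℝ} (hl : 0 ≤ l) :
    ∑ ε : ι → Bool, exp (l * ‖signedSum ε x‖)
      ≤ 2 ^ Fintype.card ι * (2 * Fintype.card κ) * exp (l ^ 2 * (∑ i, ‖x i‖ ^ 2) / 2) := by
  have hcoord (j : κ) (l' : ℝ) (hl' : l' ^ 2 = l ^ 2) :
      ∑ ε : ι → Bool, exp (l' * signedSum ε (fun i => x i j))
        ≤ 2 ^ Fintype.card ι * exp (l ^ 2 * (∑ i, ‖x i‖ ^ 2) / 2) := by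
    refine (sum_exp_mul_signedSum_le _ l').trans ?_
    rw [hl']
    gcongr _ * exp (_ * ?_ / 2)
    refine sum_le_sum fun i _ => ?_
    simpa only [Real.norm_eq_abs, sq_abs] using
      pow_le_pow_left₀ (norm_nonneg _) (norm_le_pi_norm (x i) j) 2
  calc ∑ ε : ι → Bool, exp (l * ‖signedSum ε x‖)
      ≤ ∑ ε : ι → Bool, ∑ j, (exp (l * signedSum ε (fun i => x i j))
          + exp (-l * signedSum ε (fun i => x i j))) := by
        gcongr with ε
        simpa only [signedSum_apply] using exp_mul_norm_le_sum (signedSum ε x) hl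
    _ = ∑ j, (∑ ε : ι → Bool, exp (l * signedSum ε (fun i => x i j))
          + ∑ ε : ι → Bool, exp (-l * signedSum ε (fun i => x i j))) := by
        rw [sum_comm]
        simp only [sum_add_distrib]
    _ ≤ ∑ _j : κ, (2 ^ Fintype.card ι * exp (l ^ 2 * (∑ i, ‖x i‖ ^ 2) / 2)
          + 2 ^ Fintype.card ι * exp (l ^ 2 * (∑ i, ‖x i‖ ^ 2) / 2)) := by
        gcongr with j
        · exact hcoord j l rfl
        · exact hcoord j (-l) (neg_sq l)
    _ = 2 ^ Fintype.card ι * (2 * Fintype.card κ) * exp (l ^ 2 * (∑ i, ‖x i‖ ^ 2) / 2) := by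
        rw [sum_const, card_univ, nsmul_eq_mul]
        ring

end Rademacher

lemma sq_le_two_mul_sq_add_exp {w r l : ℝ} (hw : 0 ≤ w) (hl : 0 < l) :
    w ^ 2 ≤ 2 * r ^ 2 + 4 / l ^ 2 * exp (l * (w - r)) := by
  rcases le_or_gt w r with hwr | hrw
  · have : 0 ≤ 4 / l ^ 2 * exp (l * (w - r)) := by positivity
    nlinarith
  · have htaylor : (l * (w - r)) ^ 2 / 2 ≤ exp (l * (w - r)) := by
      simpa using pow_div_factorial_le_exp _ (by nlinarith) 2
    have hexcess : 2 * (w - r) ^ 2 ≤ 4 / l ^ 2 * exp (l * (w - r)) := by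
      rw [div_mul_eq_mul_div, le_div_iff₀ (by positivity)]
      nlinarith
    nlinarith [sq_nonneg (w - 2 * r)]

theorem sum_sq_le_of_sum_exp_le {κ : Type*} [Fintype κ] {W : κ → ℝ} (hW : ∀ k, 0 ≤ W k)
    {K v : ℝ} (hK : 1 < K) (hv : 0 < v)
    (hexp : ∀ l, 0 < l → ∑ k, exp (l * W k) ≤ Fintype.card κ * K * exp (l ^ 2 * v / 2)) :
    ∑ k, W k ^ 2 ≤ Fintype.card κ * (4 * log K + 2 / log K) * v := by
  set L := log K
  have hL : 0 < L := log_pos hK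
  set l := √(2 * L / v)
  have hl : 0 < l := sqrt_pos.mpr (by positivity)
  have hl2 : l ^ 2 = 2 * L / v := sq_sqrt (by positivity)
  have hmgf : exp (-(l * (l * v))) * (K * exp (l ^ 2 * v / 2)) = 1 := by
    have hexponent : -(l * (l * v)) + l ^ 2 * v / 2 = -L := by
      rw [← mul_assoc, ← sq, hl2]
      field_simp
      ring
    rw [mul_left_comm, ← exp_add, hexponent, exp_neg, exp_log (by linarith),
      mul_inv_cancel₀ (by linarith)]
  calc ∑ k, W k ^ 2
      ≤ ∑ k, (2 * (l * v) ^ 2 + 4 / l ^ 2 * exp (-(l * (l * v))) * exp (l * W k)) := by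
        gcongr with k
        rw [mul_assoc, ← exp_add, neg_add_eq_sub, ← mul_sub]
        exact sq_le_two_mul_sq_add_exp (hW k) hl
    _ = Fintype.card κ * (2 * (l * v) ^ 2)
          + 4 / l ^ 2 * exp (-(l * (l * v))) * ∑ k, exp (l * W k) := by
        rw [sum_add_distrib, sum_const, card_univ, nsmul_eq_mul, mul_sum]
    _ ≤ Fintype.card κ * (2 * (l * v) ^ 2)
          + 4 / l ^ 2 * exp (-(l * (l * v))) * (Fintype.card κ * K * exp (l ^ 2 * v / 2)) := by
        gcongr
        exact hexp l hl
    _ = Fintype.card κ * (2 * (l * v) ^ 2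
          + 4 / l ^ 2 * (exp (-(l * (l * v))) * (K * exp (l ^ 2 * v / 2)))) := by
        ring
    _ = Fintype.card κ * (4 * L + 2 / L) * v := by
        rw [hmgf, mul_pow, hl2]
        field_simp
        ring

lemma four_mul_log_add_two_div_log_le {M : ℝ} (hM : 1 ≤ M) :
    4 * log (2 * M) + 2 / log (2 * M) ≤ 4 ^ 2 * logb 2 (M + 1) := by
  have h2 : 0 < log 2 := log_pos one_lt_two
  have hlogM : 0 ≤ log M := log_nonneg hM
  have hlogM1 : log M ≤ log (M + 1) := log_le_log (by linarith) (by linarith)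
  have hlog2 : log 2 ≤ log (M + 1) := log_le_log (by norm_num) (by linarith)
  have hinv : 2 / (log 2 + log M) ≤ 2 / log 2 := by gcongr; linarith
  rw [log_mul two_ne_zero (by positivity), logb]
  have hmain : 4 * (log 2 + log M) + 2 / log 2 ≤ 4 ^ 2 * (log (M + 1) / log 2) := by
    rw [mul_div_assoc', le_div_iff₀ h2, add_mul, div_mul_cancel₀ _ h2.ne']
    nlinarith [log_two_lt_d9, log_two_gt_d9, mul_le_mul_of_nonneg_left hlogM1 h2.le,
      mul_le_mul_of_nonneg_left hlog2 h2.le]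
  linarith

/-- There is a constant `c > 0` such that every `L_∞^M` (`M ≥ 1`)
satisfies the type-2 inequality with constant `c·(log₂(M+1))^(1/2)`:
for every `m` and all `x₁,…,x_m ∈ ℝ^M`,
`2^(-m) ∑_{ε ∈ {−1,1}^m} ‖∑ i, ε i • x i‖_{L_∞^M}^2
  ≤ c^2 · log₂(M+1) · ∑ i, ‖x i‖_{L_∞^M}^2`. -/
theorem linf_type_2 :
    ∃ c : ℝ, 0 < c ∧
      ∀ (M : ℕ), 1 ≤ M → ∀ (m : ℕ) (x : Fin m → Fin M → ℝ),
        ((2 : ℝ) ^ m)⁻¹ *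
            ∑ ε : Fin m → Bool,
              linfNorm M (∑ i, if ε i then x i else -x i) ^ 2
          ≤ c ^ 2 * Real.logb 2 (M + 1) * ∑ i, linfNorm M (x i) ^ 2 := by
  refine ⟨4, by norm_num, fun M hM m x => ?_⟩
  have : Nonempty (Fin M) := ⟨⟨0, hM⟩⟩
  simp only [linfNorm_eq_norm]
  change _ * ∑ ε, ‖signedSum ε x‖ ^ 2 ≤ _
  rcases (sum_nonneg fun i _ => sq_nonneg ‖x i‖).eq_or_lt with hS | hS
  · have hx : x = 0 := funext fun i => norm_eq_zero.mp <| pow_eq_zero_iff two_ne_zero |>.mp <|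
      (sum_eq_zero_iff_of_nonneg fun i _ => sq_nonneg ‖x i‖).mp hS.symm i (mem_univ i)
    simp [hx, signedSum]
  have hsq := sum_sq_le_of_sum_exp_le (W := fun ε : Fin m → Bool => ‖signedSum ε x‖)
    (fun ε => norm_nonneg _) (K := 2 * M) (by norm_cast; omega) hS fun l hl => by
      simpa [mul_assoc] using sum_exp_mul_norm_signedSum_le x hl.le
  rw [show Fintype.card (Fin m → Bool) = 2 ^ m by simp] at hsq
  calc ((2 : ℝ) ^ m)⁻¹ * ∑ ε, ‖signedSum ε x‖ ^ 2
      ≤ (4 * log (2 * M) + 2 / log (2 * M)) * ∑ i, ‖x i‖ ^ 2 := by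
        rw [inv_mul_le_iff₀ (by positivity)]
        simpa [mul_assoc] using hsq
    _ ≤ 4 ^ 2 * logb 2 (M + 1) * ∑ i, ‖x i‖ ^ 2 := by
        gcongr
        exact four_mul_log_add_two_div_log_le (by exact_mod_cast hM)
end

section
/- For every p with 1 ≤ p < 2 there is a constant c > 0 such that for all integers n, M, N ≥ 1 and every f : {0,…,N−1} → ℝ^M with ‖f(j)‖_{L_p^M} ≤ 1 for all j, the Monte Carlo method satisfies N^{−n} · Σ_{(t_1,…,t_n) ∈ {0,…,N−1}^n} ‖ S_N f − (1/n) Σ_{l=1}^n f(t_l) ‖_{L_p^M} ≤ c·n^{−1+1/p}. -/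
/-- The normalized `L_p^M` norm on `ℝ^M`: `‖x‖ = ((1/M) ∑ i, |x i|^p)^(1/p)`. -/
noncomputable def lpNorm (p : ℝ) (M : ℕ) (x : Fin M → ℝ) : ℝ :=
  ((M : ℝ)⁻¹ * ∑ i, |x i| ^ p) ^ (1 / p)

/-!
Coordinatewise, the Monte Carlo error is `n⁻¹` times a sum of `n` independent centred samples
`y (t l)`. For `1 ≤ p ≤ 2` the `p`-th moment of such a sum grows only linearly in `n`
(von Bahr–Esseen): after symmetrizing with an independent copy the increments `y a - y a'` are
symmetric, and Clarkson's inequality `|A + b|^p + |A - b|^p ≤ 2 (|A|^p + |b|^p)` adds them one at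
a time. Hence each coordinate has `p`-th moment error at most `4^p n^(1-p) 𝔼 |f|^p`; averaging
over the coordinates and Jensen's inequality for `s ↦ s^(1/p)` give the bound with `c = 4`.
-/

open Finset Real
open scoped BigOperators

lemma ConvexOn.map_expect_le {ι : Type*} {s : Finset ι} {D : Set ℝ} {φ : ℝ → ℝ}
    (hφ : ConvexOn ℝ D φ) (hs : s.Nonempty) {f : ι → ℝ} (hf : ∀ i ∈ s, f i ∈ D) :
    φ (𝔼 i ∈ s, f i) ≤ 𝔼 i ∈ s, φ (f i) := by
  have hcard : (0:ℝ) < #s := by exact_mod_cast hs.card_pos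
  simp only [expect_eq_sum_div_card, div_eq_inv_mul, mul_sum]
  exact hφ.map_sum_le (fun _ _ => by positivity)
    (by rw [sum_const, nsmul_eq_mul, mul_inv_cancel₀ hcard.ne']) hf

lemma ConcaveOn.le_map_expect {ι : Type*} {s : Finset ι} {D : Set ℝ} {φ : ℝ → ℝ}
    (hφ : ConcaveOn ℝ D φ) (hs : s.Nonempty) {f : ι → ℝ} (hf : ∀ i ∈ s, f i ∈ D) :
    𝔼 i ∈ s, φ (f i) ≤ φ (𝔼 i ∈ s, f i) := by
  simpa [expect_neg_distrib] using hφ.neg.map_expect_le hs hf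

lemma abs_expect_rpow_le {ι : Type*} {s : Finset ι} (hs : s.Nonempty) (f : ι → ℝ) {p : ℝ}
    (hp : 1 ≤ p) : |𝔼 i ∈ s, f i| ^ p ≤ 𝔼 i ∈ s, |f i| ^ p :=
  (rpow_le_rpow (abs_nonneg _) (abs_expect_le s f) (by linarith)).trans
    ((convexOn_rpow hp).map_expect_le hs fun i _ => abs_nonneg (f i))

lemma Real.abs_sub_rpow_le {p : ℝ} (hp : 1 ≤ p) (a b : ℝ) :
    |a - b| ^ p ≤ 2 ^ (p - 1) * (|a| ^ p + |b| ^ p) := by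
  have h := NNReal.rpow_add_le_mul_rpow_add_rpow ‖a‖₊ ‖b‖₊ hp
  have h' : (|a| + |b|) ^ p ≤ 2 ^ (p - 1) * (|a| ^ p + |b| ^ p) := by exact_mod_cast h
  exact (rpow_le_rpow (abs_nonneg _) (abs_sub a b) (by linarith)).trans h'

lemma abs_add_rpow_add_abs_sub_rpow_le {p : ℝ} (hp0 : 0 ≤ p) (hp2 : p ≤ 2) (a b : ℝ) :
    |a + b| ^ p + |a - b| ^ p ≤ 2 * (|a| ^ p + |b| ^ p) := by
  have hq0 : 0 ≤ p / 2 := by linarith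
  have hq1 : p / 2 ≤ 1 := by linarith
  have abs_rpow (x : ℝ) : |x| ^ p = (x ^ 2) ^ (p / 2) := by
    rw [← sq_abs, ← rpow_natCast, ← rpow_mul (abs_nonneg x), Nat.cast_ofNat,
      mul_div_cancel₀ p two_ne_zero]
  have midpoint := (concaveOn_rpow hq0 hq1).2 (sq_nonneg (a + b)) (sq_nonneg (a - b))
    (by norm_num : (0:ℝ) ≤ 1 / 2) (by norm_num : (0:ℝ) ≤ 1 / 2) (by norm_num)
  have hsum : (1 / 2 : ℝ) • (a + b) ^ 2 + (1 / 2 : ℝ) • (a - b) ^ 2 = a ^ 2 + b ^ 2 := by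
    simp only [smul_eq_mul]; ring
  rw [hsum, smul_eq_mul, smul_eq_mul] at midpoint
  have subadd := rpow_add_le_add_rpow (sq_nonneg a) (sq_nonneg b) hq0 hq1
  simp only [abs_rpow]
  linarith

lemma Fintype.expect_prod_type {α β : Type*} [Fintype α] [Fintype β] (g : α × β → ℝ) :
    𝔼 x, g x = 𝔼 a, 𝔼 b, g (a, b) := by
  rw [← Finset.univ_product_univ, Finset.expect_product]

lemma Fintype.expect_comp_eval {ι α : Type*} [Fintype ι] [DecidableEq ι] [Fintype α]
    [Nonempty α] (l : ι) (g : α → ℝ) : 𝔼 t : ι → α, g (t l) = 𝔼 a, g a := by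
  rw [Fintype.expect_equiv (Equiv.piSplitAt l fun _ => α) (fun t => g (t l)) (fun x => g x.1)
    fun _ => rfl, Fintype.expect_prod_type]
  simp only [Fintype.expect_const]

lemma Fin.expect_pi_succ {α : Type*} [Fintype α] {n : ℕ} (G : (Fin (n + 1) → α) → ℝ) :
    𝔼 u, G u = 𝔼 c, 𝔼 u : Fin n → α, G (Fin.cons c u) := by
  rw [← Fintype.expect_equiv (Fin.consEquiv fun _ => α) (fun x => G (Fin.cons x.1 x.2)) G
    fun _ => rfl, Fintype.expect_prod_type]

lemma expect_abs_add_rpow_le_of_symmetric {γ : Type*} [Fintype γ] [Nonempty γ]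
    (σ : Equiv.Perm γ) {z : γ → ℝ} (hz : ∀ c, z (σ c) = -z c) {p : ℝ} (hp0 : 0 ≤ p)
    (hp2 : p ≤ 2) (A : ℝ) : 𝔼 c, |A + z c| ^ p ≤ |A| ^ p + 𝔼 c, |z c| ^ p := by
  -- `σ` exchanges `A + z` with `A - z`, so averaging Clarkson's inequality over `c` suffices.
  have hreflect : 𝔼 c, |A + z c| ^ p = 𝔼 c, |A - z c| ^ p :=
    Fintype.expect_equiv σ _ _ fun c => by rw [hz, sub_neg_eq_add]
  have hclarkson :
      𝔼 c, (|A + z c| ^ p + |A - z c| ^ p) ≤ 𝔼 c, 2 * (|A| ^ p + |z c| ^ p) :=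
    expect_le_expect fun c _ => abs_add_rpow_add_abs_sub_rpow_le hp0 hp2 A (z c)
  rw [expect_add_distrib, ← hreflect, ← mul_expect, expect_add_distrib,
    Fintype.expect_const] at hclarkson
  linarith

lemma expect_abs_sum_rpow_le_of_symmetric {γ : Type*} [Fintype γ] [Nonempty γ]
    (σ : Equiv.Perm γ) {z : γ → ℝ} (hz : ∀ c, z (σ c) = -z c) {p : ℝ} (hp0 : 0 < p)
    (hp2 : p ≤ 2) (n : ℕ) :
    𝔼 u : Fin n → γ, |∑ l, z (u l)| ^ p ≤ n * 𝔼 c, |z c| ^ p := by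
  induction n with
  | zero => simp [zero_rpow hp0.ne']
  | succ n ih =>
    calc 𝔼 u : Fin (n + 1) → γ, |∑ l, z (u l)| ^ p
        = 𝔼 u : Fin n → γ, 𝔼 c, |∑ l, z (u l) + z c| ^ p := by
          rw [Fin.expect_pi_succ, expect_comm]
          simp only [Fin.sum_univ_succ, Fin.cons_zero, Fin.cons_succ, add_comm]
      _ ≤ 𝔼 u : Fin n → γ, (|∑ l, z (u l)| ^ p + 𝔼 c, |z c| ^ p) :=
          expect_le_expect fun u _ => expect_abs_add_rpow_le_of_symmetric σ hz hp0.le hp2 _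
      _ ≤ (n + 1 : ℕ) * 𝔼 c, |z c| ^ p := by
          rw [expect_add_distrib, Fintype.expect_const]
          push_cast
          linarith

lemma expect_abs_rpow_le_expect_expect_abs_sub_rpow {β : Type*} [Fintype β] {F : β → ℝ}
    (hF : 𝔼 t, F t = 0) {p : ℝ} (hp : 1 ≤ p) :
    𝔼 t, |F t| ^ p ≤ 𝔼 t, 𝔼 t', |F t - F t'| ^ p := by
  refine expect_le_expect fun t _ => ?_
  have : Nonempty β := ⟨t⟩
  have hFt : F t = 𝔼 t', (F t - F t') := by
    rw [expect_sub_distrib, Fintype.expect_const, hF, sub_zero]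
  simpa only [← hFt] using abs_expect_rpow_le univ_nonempty (fun t' => F t - F t') hp

lemma expect_expect_abs_sub_rpow_le {α : Type*} [Fintype α] [Nonempty α] (y : α → ℝ)
    {p : ℝ} (hp : 1 ≤ p) : 𝔼 a, 𝔼 b, |y a - y b| ^ p ≤ 2 ^ p * 𝔼 a, |y a| ^ p := by
  calc 𝔼 a, 𝔼 b, |y a - y b| ^ p ≤ 𝔼 a, 𝔼 b, 2 ^ (p - 1) * (|y a| ^ p + |y b| ^ p) :=
        expect_le_expect fun a _ => expect_le_expect fun b _ => Real.abs_sub_rpow_le hp _ _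
    _ = 2 ^ (p - 1) * 2 * 𝔼 a, |y a| ^ p := by
        simp only [← mul_expect, expect_add_distrib, Fintype.expect_const]
        ring
    _ = 2 ^ p * 𝔼 a, |y a| ^ p := by
        rw [← rpow_add_one two_ne_zero, sub_add_cancel]

lemma expect_abs_sum_rpow_le_of_expect_eq_zero {α : Type*} [Fintype α] [Nonempty α]
    {y : α → ℝ} (hy : 𝔼 a, y a = 0) {p : ℝ} (hp1 : 1 ≤ p) (hp2 : p ≤ 2) (n : ℕ) :
    𝔼 t : Fin n → α, |∑ l, y (t l)| ^ p ≤ 2 ^ p * n * 𝔼 a, |y a| ^ p := by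
  have hmean : 𝔼 t : Fin n → α, ∑ l, y (t l) = 0 := by
    simp only [expect_sum_comm, Fintype.expect_comp_eval, hy, sum_const_zero]
  calc 𝔼 t : Fin n → α, |∑ l, y (t l)| ^ p
      ≤ 𝔼 t : Fin n → α, 𝔼 t' : Fin n → α, |∑ l, y (t l) - ∑ l, y (t' l)| ^ p :=
        expect_abs_rpow_le_expect_expect_abs_sub_rpow hmean hp1
    _ = 𝔼 u : Fin n → α × α, |∑ l, (y (u l).1 - y (u l).2)| ^ p := by
        rw [← Fintype.expect_prod_type fun w : (Fin n → α) × (Fin n → α) =>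
          |∑ l, y (w.1 l) - ∑ l, y (w.2 l)| ^ p]
        exact Fintype.expect_equiv (Equiv.arrowProdEquivProdArrow _ _ _).symm _ _ fun w => by
          simp [sum_sub_distrib]
    _ ≤ n * 𝔼 c : α × α, |y c.1 - y c.2| ^ p :=
        expect_abs_sum_rpow_le_of_symmetric (Equiv.prodComm α α)
          (z := fun c => y c.1 - y c.2) (fun c => (neg_sub _ _).symm) (by linarith) hp2 n
    _ ≤ n * (2 ^ p * 𝔼 a, |y a| ^ p) := by
        rw [Fintype.expect_prod_type]
        gcongr
        exact expect_expect_abs_sub_rpow_le y hp1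
    _ = 2 ^ p * n * 𝔼 a, |y a| ^ p := by ring

lemma expect_abs_sub_expect_rpow_le {α : Type*} [Fintype α] [Nonempty α] (x : α → ℝ)
    {p : ℝ} (hp : 1 ≤ p) : 𝔼 a, |x a - 𝔼 b, x b| ^ p ≤ 2 ^ p * 𝔼 a, |x a| ^ p := by
  calc 𝔼 a, |x a - 𝔼 b, x b| ^ p ≤ 𝔼 a, 2 ^ (p - 1) * (|x a| ^ p + |𝔼 b, x b| ^ p) :=
        expect_le_expect fun a _ => Real.abs_sub_rpow_le hp _ _
    _ = 2 ^ (p - 1) * (𝔼 a, |x a| ^ p + |𝔼 b, x b| ^ p) := by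
        rw [← mul_expect, expect_add_distrib, Fintype.expect_const]
    _ ≤ 2 ^ (p - 1) * (𝔼 a, |x a| ^ p + 𝔼 a, |x a| ^ p) := by
        gcongr
        exact abs_expect_rpow_le univ_nonempty x hp
    _ = 2 ^ p * 𝔼 a, |x a| ^ p := by
        rw [← two_mul, ← mul_assoc, ← rpow_add_one two_ne_zero, sub_add_cancel]

lemma expect_abs_expect_sub_sampleMean_rpow_le {α : Type*} [Fintype α] [Nonempty α]
    (x : α → ℝ) {p : ℝ} (hp1 : 1 ≤ p) (hp2 : p ≤ 2) {n : ℕ} (hn : 0 < n) :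
    𝔼 t : Fin n → α, |𝔼 a, x a - (n : ℝ)⁻¹ * ∑ l, x (t l)| ^ p
      ≤ 4 ^ p * (n : ℝ) ^ (1 - p) * 𝔼 a, |x a| ^ p := by
  have hn' : (0 : ℝ) < n := Nat.cast_pos.2 hn
  set m := 𝔼 a, x a
  have hcentered : 𝔼 a, (x a - m) = 0 := by
    rw [expect_sub_distrib, Fintype.expect_const, sub_self]
  have herror (t : Fin n → α) :
      |m - (n : ℝ)⁻¹ * ∑ l, x (t l)| ^ p
        = (n : ℝ) ^ (-p) * |∑ l, (x (t l) - m)| ^ p := by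
    have : m - (n : ℝ)⁻¹ * ∑ l, x (t l) = -((n : ℝ)⁻¹ * ∑ l, (x (t l) - m)) := by
      rw [sum_sub_distrib, sum_const, card_univ, Fintype.card_fin, nsmul_eq_mul]
      field_simp
      ring
    rw [this, abs_neg, abs_mul, abs_inv, abs_of_pos hn',
      mul_rpow (by positivity) (abs_nonneg _), inv_rpow hn'.le, rpow_neg hn'.le]
  calc 𝔼 t : Fin n → α, |m - (n : ℝ)⁻¹ * ∑ l, x (t l)| ^ p
      = (n : ℝ) ^ (-p) * 𝔼 t : Fin n → α, |∑ l, (x (t l) - m)| ^ p := by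
        simp only [herror, mul_expect]
    _ ≤ (n : ℝ) ^ (-p) * (2 ^ p * n * 𝔼 a, |x a - m| ^ p) := by
        gcongr
        exact expect_abs_sum_rpow_le_of_expect_eq_zero hcentered hp1 hp2 n
    _ ≤ (n : ℝ) ^ (-p) * (2 ^ p * n * (2 ^ p * 𝔼 a, |x a| ^ p)) := by
        gcongr
        exact expect_abs_sub_expect_rpow_le x hp1
    _ = 4 ^ p * (n : ℝ) ^ (1 - p) * 𝔼 a, |x a| ^ p := by
        rw [sub_eq_neg_add, rpow_add_one hn'.ne', show (4 : ℝ) = 2 * 2 by norm_num,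
          mul_rpow zero_le_two zero_le_two]
        ring

lemma lpNorm_eq_expect (p : ℝ) (M : ℕ) (x : Fin M → ℝ) :
    lpNorm p M x = (𝔼 i, |x i| ^ p) ^ (1 / p) := by
  rw [lpNorm, Fintype.expect_eq_sum_div_card, Fintype.card_fin, inv_mul_eq_div]

lemma lpNorm_nonneg (p : ℝ) (M : ℕ) (x : Fin M → ℝ) : 0 ≤ lpNorm p M x := by
  rw [lpNorm_eq_expect]
  exact rpow_nonneg (expect_nonneg fun i _ => by positivity) _

lemma lpNorm_rpow {p : ℝ} (hp : p ≠ 0) (M : ℕ) (x : Fin M → ℝ) :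
    lpNorm p M x ^ p = 𝔼 i, |x i| ^ p := by
  rw [lpNorm_eq_expect, ← rpow_mul (expect_nonneg fun i _ => by positivity),
    one_div_mul_cancel hp, rpow_one]

lemma expect_lpNorm_expect_sub_sampleMean_le {α : Type*} [Fintype α] [Nonempty α] {M : ℕ}
    (f : α → Fin M → ℝ) {p : ℝ} (hp1 : 1 ≤ p) (hp2 : p ≤ 2) {n : ℕ} (hn : 0 < n) :
    𝔼 t : Fin n → α, lpNorm p M (fun i => 𝔼 a, f a i - (n : ℝ)⁻¹ * ∑ l, f (t l) i)
      ≤ 4 * (n : ℝ) ^ (-1 + 1 / p) * (𝔼 a, lpNorm p M (f a) ^ p) ^ (1 / p) := by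
  have hp0 : 0 < p := by linarith
  have hn' : (0 : ℝ) < n := Nat.cast_pos.2 hn
  set C := 4 ^ p * (n : ℝ) ^ (1 - p)
  calc _ ≤ (𝔼 t : Fin n → α, 𝔼 i,
            |𝔼 a, f a i - (n : ℝ)⁻¹ * ∑ l, f (t l) i| ^ p) ^ (1 / p) := by
        simp only [lpNorm_eq_expect]
        exact (concaveOn_rpow (by positivity) ((div_le_one hp0).2 hp1)).le_map_expect
          univ_nonempty fun t _ => Set.mem_Ici.2 (expect_nonneg fun i _ => by positivity)
    _ ≤ (𝔼 i, C * 𝔼 a, |f a i| ^ p) ^ (1 / p) := by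
        rw [expect_comm]
        gcongr with i
        exact expect_abs_expect_sub_sampleMean_rpow_le (fun a => f a i) hp1 hp2 hn
    _ = C ^ (1 / p) * (𝔼 a, lpNorm p M (f a) ^ p) ^ (1 / p) := by
        rw [← mul_expect, expect_comm, mul_rpow (by positivity)
          (expect_nonneg fun i _ => expect_nonneg fun a _ => by positivity)]
        simp only [lpNorm_rpow hp0.ne']
    _ = 4 * (n : ℝ) ^ (-1 + 1 / p) * (𝔼 a, lpNorm p M (f a) ^ p) ^ (1 / p) := by
        rw [mul_rpow (by positivity) (by positivity), ← rpow_mul zero_le_four,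
          ← rpow_mul hn'.le, mul_one_div_cancel hp0.ne', rpow_one]
        congr 3
        field_simp
        ring

/-- For every `1 ≤ p < 2` there is a constant `c > 0` such that for
all `n, M, N ≥ 1` and every `f : {0,…,N−1} → ℝ^M` with `‖f j‖_{L_p^M} ≤ 1`, the
average (over all `n`-tuples of sample points) `L_p^M` error of the Monte Carlo
method for the mean `S_N f = (1/N) ∑ j, f j` is at most `c·n^(−1+1/p)`. -/
theorem mc_upper_lp_low (p : ℝ) (hp1 : 1 ≤ p) (hp2 : p < 2) :
    ∃ c : ℝ, 0 < c ∧
      ∀ (n M N : ℕ), 1 ≤ n → 1 ≤ M → 1 ≤ N →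
        ∀ f : Fin N → Fin M → ℝ, (∀ j, lpNorm p M (f j) ≤ 1) →
          ((N : ℝ) ^ n)⁻¹ *
              ∑ t : Fin n → Fin N,
                lpNorm p M ((N : ℝ)⁻¹ • ∑ j, f j - (n : ℝ)⁻¹ • ∑ l, f (t l))
            ≤ c * (n : ℝ) ^ (-1 + 1 / p) := by
  refine ⟨4, four_pos, fun n M N hn _ hN f hf => ?_⟩
  have : Nonempty (Fin N) := ⟨⟨0, hN⟩⟩
  have hp0 : 0 < p := by linarith
  have hmoment : 𝔼 j, lpNorm p M (f j) ^ p ≤ 1 :=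
    expect_le univ_nonempty fun j _ => rpow_le_one (lpNorm_nonneg p M (f j)) (hf j) hp0.le
  calc ((N : ℝ) ^ n)⁻¹ * ∑ t : Fin n → Fin N,
          lpNorm p M ((N : ℝ)⁻¹ • ∑ j, f j - (n : ℝ)⁻¹ • ∑ l, f (t l))
      = 𝔼 t : Fin n → Fin N,
          lpNorm p M (fun i => 𝔼 j, f j i - (n : ℝ)⁻¹ * ∑ l, f (t l) i) := by
        rw [Fintype.expect_eq_sum_div_card, Fintype.card_fun, Fintype.card_fin,
          Fintype.card_fin, Nat.cast_pow, div_eq_inv_mul]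
        congr! with t i
        simp [Fintype.expect_eq_sum_div_card, div_eq_inv_mul]
    _ ≤ 4 * (n : ℝ) ^ (-1 + 1 / p) * (𝔼 j, lpNorm p M (f j) ^ p) ^ (1 / p) :=
        expect_lpNorm_expect_sub_sampleMean_le f hp1 hp2.le hn
    _ ≤ 4 * (n : ℝ) ^ (-1 + 1 / p) := by
        refine mul_le_of_le_one_right (by positivity) (rpow_le_one ?_ hmoment (by positivity))
        exact expect_nonneg fun j _ => rpow_nonneg (lpNorm_nonneg p M (f j)) p
end
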